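/- If (C, W) admits the colimit functor colim_I : C^I → C and a realizable homotopy colimit hocolim_I : (C^I, W) → (C, W), then the absolute left derived functor of colim_I exists and agrees with the functor C^I[W⁻¹] → C[W⁻¹] induced by hocolim_I. -/

import Mathlib

open CategoryTheory CategoryTheory.Limits

namespace Paper

/-- A functor preserves weak equivalences (is a relative functor). -/
def PresW {C D : Type*} [Category C] [Category D]
    (WC : MorphismProperty C) (WD : MorphismProperty D) (F : C ⥤ D) : Prop :=
  ∀ ⦃X Y : C⦄ (f : X ⟶ Y), WC f → WD (F.map f)

/-- A class of morphisms is saturated: it is the preimage of the isomorphisms under the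
localization functor. -/
def Saturated {C : Type*} [Category C] (W : MorphismProperty C) : Prop :=
  W = (MorphismProperty.isomorphisms W.Localization).inverseImage W.Q

/-- The category of relative functors `(C, WC) ⟶ (D, WD)` (a full subcategory of `C ⥤ D`). -/
abbrev RelFun (C D : Type*) [Category C] [Category D]
    (WC : MorphismProperty C) (WD : MorphismProperty D) :=
  ObjectProperty.FullSubcategory (fun F : C ⥤ D => PresW WC WD F)

/-- Pointwise weak equivalences on the category of relative functors.  Relative natural
transformations `F ⇢ G` are the morphisms `Q.obj F ⟶ Q.obj G` in the localization of the
category of relative functors at this class. -/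
def relPt {C D : Type*} [Category C] [Category D]
    (WC : MorphismProperty C) (WD : MorphismProperty D) :
    MorphismProperty (RelFun C D WC WD) :=
  fun _ _ τ => ∀ X : C, WD (τ.hom.app X)

/-- Descending a weak-equivalence preserving functor to localizations. -/
noncomputable def descend {C' D' : Type*} [Category C'] [Category D']
    (P : MorphismProperty C') (P' : MorphismProperty D') (T : C' ⥤ D') (hT : PresW P P' T) :
    P.Localization ⥤ P'.Localization :=
  Localization.Construction.lift (T ⋙ P'.Q)
    (fun _ _ f hf => Localization.inverts P'.Q P' _ (hT f hf))

section whisker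

variable {C D E : Type*} [Category C] [Category D] [Category E]
  (WC : MorphismProperty C) (WD : MorphismProperty D) (WE : MorphismProperty E)

/-- Postcomposition with a relative functor, on relative functor categories. -/
def postcompF (K : D ⥤ E) (hK : PresW WD WE K) :
    RelFun C D WC WD ⥤ RelFun C E WC WE where
  obj T := ⟨T.1 ⋙ K, fun _ _ _ hf => hK _ (T.2 _ hf)⟩
  map τ := ObjectProperty.homMk (Functor.whiskerRight τ.hom K)
  map_id := by
    intro T
    apply InducedCategory.hom_ext
    apply NatTrans.ext
    funext X
    exact K.map_id _
  map_comp := by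
    intro T T' T'' f g
    apply InducedCategory.hom_ext
    apply NatTrans.ext
    funext X
    exact K.map_comp _ _

/-- Precomposition with a relative functor, on relative functor categories. -/
def precompF (K : E ⥤ C) (hK : PresW WE WC K) :
    RelFun C D WC WD ⥤ RelFun E D WE WD where
  obj T := ⟨K ⋙ T.1, fun _ _ _ hf => T.2 _ (hK _ hf)⟩
  map τ := ObjectProperty.homMk (Functor.whiskerLeft K τ.hom)
  map_id := by
    intro T
    apply InducedCategory.hom_ext
    apply NatTrans.ext
    funext X
    rfl
  map_comp := by
    intro T T' T'' f g
    apply InducedCategory.hom_ext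
    apply NatTrans.ext
    funext X
    rfl

/-- Postcomposition with a relative functor, descended to relative natural transformations. -/
noncomputable def postcompLoc (K : D ⥤ E) (hK : PresW WD WE K) :
    (relPt WC WD).Localization ⥤ (relPt WC WE).Localization :=
  descend _ _ (postcompF WC WD WE K hK) (fun _ _ τ hτ X => hK _ (hτ X))

/-- Precomposition with a relative functor, descended to relative natural transformations. -/
noncomputable def precompLoc (K : E ⥤ C) (hK : PresW WE WC K) :
    (relPt WC WD).Localization ⥤ (relPt WE WD).Localization :=
  descend _ _ (precompF WC WD WE K hK) (fun _ _ τ hτ X => hτ _)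

end whisker

/-- A relative adjunction: an adjunction in the 2-category of relative categories.  The
unit and counit are relative natural transformations, i.e. morphisms in the localizations of
the relative functor categories at the pointwise weak equivalences, and they satisfy the
triangle identities there. -/
structure RelAdjunction {C D : Type*} [Category C] [Category D]
    (WC : MorphismProperty C) (WD : MorphismProperty D)
    (F : C ⥤ D) (G : D ⥤ C) (hF : PresW WC WD F) (hG : PresW WD WC G) where
  /-- the counit `α : FG ⇢ 1_D` -/
  α : (relPt WD WD).Q.obj ⟨G ⋙ F, fun _ _ _ hf => hF _ (hG _ hf)⟩ ⟶
      (relPt WD WD).Q.obj ⟨𝟭 D, fun _ _ _ hf => hf⟩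
  /-- the unit `β : 1_C ⇢ GF` -/
  β : (relPt WC WC).Q.obj ⟨𝟭 C, fun _ _ _ hf => hf⟩ ⟶
      (relPt WC WC).Q.obj ⟨F ⋙ G, fun _ _ _ hf => hG _ (hF _ hf)⟩
  triangle_F :
    (postcompLoc WC WC WD F hF).map β ≫ (precompLoc WD WD WC F hF).map α =
      𝟙 ((relPt WC WD).Q.obj ⟨F, hF⟩)
  triangle_G :
    (precompLoc WC WC WD G hG).map β ≫ (postcompLoc WD WD WC G hG).map α =
      𝟙 ((relPt WD WC).Q.obj ⟨G, hG⟩)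

end Paper

namespace Paper

/-- The pointwise weak equivalences on a diagram category `C^I`. -/
def ptW (I : Type) [SmallCategory I] {C : Type*} [Category C] (W : MorphismProperty C) :
    MorphismProperty (I ⥤ C) :=
  fun _ _ τ => ∀ i : I, W (τ.app i)

/-- The constant diagram functor is a relative functor. -/
theorem constPres (I : Type) [SmallCategory I] {C : Type*} [Category C]
    (W : MorphismProperty C) : PresW W (ptW I W) (Functor.const I) :=
  fun _ _ _ hf _ => hf

/-- A realizable homotopy colimit on `(C, W)` for the index category `I`: a relative left
adjoint to the constant diagram functor `c_I : (C, W) ⟶ (C^I, W)` in the 2-category of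
relative categories. -/
structure RealizableHocolim (I : Type) [SmallCategory I]
    (C : Type*) [Category C] (W : MorphismProperty C) where
  H : (I ⥤ C) ⥤ C
  relH : PresW (ptW I W) W H
  adj : RelAdjunction (ptW I W) W H (Functor.const I) relH (constPres I W)

end Paper

/-!
Realizing relative natural transformations as natural transformations into the localization
turns the relative adjunction `hocolim_I ⊣ c_I` into an adjunction `Ho(hocolim_I) ⊣ Ho(c_I)`
of the induced functors. Since `c_I` commutes with the localization functors on the nose, the
identity square has a mate `α : Q ⋙ Ho(hocolim_I) ⟶ colim_I ⋙ Q` with respect to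
`colim_I ⊣ c_I` and `Ho(hocolim_I) ⊣ Ho(c_I)`. For any `H`, transformations
`K ⟶ Ho(hocolim_I) ⋙ H` correspond to transformations `Ho(c_I) ⋙ K ⟶ H`, which, `Q` being a
localization, are determined by their restriction along `Q`; by `colim_I ⊣ c_I` these
restrictions correspond to transformations `Q ⋙ K ⟶ colim_I ⋙ Q ⋙ H`, and the composite
bijection is composition with `α`.
-/

namespace Paper

open Functor

lemma Q_comp_descend {A B : Type*} [Category A] [Category B] (WA : MorphismProperty A)
    (WB : MorphismProperty B) (T : A ⥤ B) (hT : PresW WA WB T) :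
    WA.Q ⋙ descend WA WB T hT = T ⋙ WB.Q :=
  Localization.Construction.fac _ _

section Realization

variable {A B C : Type*} [Category A] [Category B] [Category C]
  (WA : MorphismProperty A) (WB : MorphismProperty B) (WC : MorphismProperty C)

noncomputable def realize : (relPt WA WB).Localization ⥤ (A ⥤ WB.Localization) :=
  Localization.Construction.lift
    (ObjectProperty.ι _ ⋙ (whiskeringRight A B WB.Localization).obj WB.Q)
    (fun _ _ τ hτ => by
      have (X : A) : IsIso ((whiskerRight τ.hom WB.Q).app X) :=
        Localization.inverts WB.Q WB _ (hτ X)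
      exact NatIso.isIso_of_isIso_app (whiskerRight τ.hom WB.Q))

lemma postcompLoc_comp_realize (K : B ⥤ C) (hK : PresW WB WC K) :
    postcompLoc WA WB WC K hK ⋙ realize WA WC =
      realize WA WB ⋙
        (whiskeringRight A WB.Localization WC.Localization).obj (descend WB WC K hK) :=
  Localization.Construction.uniq _ _ rfl

lemma precompLoc_comp_realize (K : C ⥤ A) (hK : PresW WC WA K) :
    precompLoc WA WB WC K hK ⋙ realize WC WB =
      realize WA WB ⋙ (whiskeringLeft C A WB.Localization).obj K :=
  Localization.Construction.uniq _ _ rfl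

lemma realize_map_postcompLoc_map (K : B ⥤ C) (hK : PresW WB WC K)
    {X Y : (relPt WA WB).Localization} (τ : X ⟶ Y) :
    (realize WA WC).map ((postcompLoc WA WB WC K hK).map τ) =
      whiskerRight ((realize WA WB).map τ) (descend WB WC K hK) := by
  have h := Functor.congr_hom (postcompLoc_comp_realize WA WB WC K hK) τ
  erw [eqToHom_refl, eqToHom_refl, Category.id_comp, Category.comp_id] at h
  exact h

lemma realize_map_precompLoc_map (K : C ⥤ A) (hK : PresW WC WA K)
    {X Y : (relPt WA WB).Localization} (τ : X ⟶ Y) :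
    (realize WC WB).map ((precompLoc WA WB WC K hK).map τ) =
      whiskerLeft K ((realize WA WB).map τ) := by
  have h := Functor.congr_hom (precompLoc_comp_realize WA WB WC K hK) τ
  erw [eqToHom_refl, eqToHom_refl, Category.id_comp, Category.comp_id] at h
  exact h

end Realization

namespace RelAdjunction

variable {C D : Type*} [Category C] [Category D] {WC : MorphismProperty C}
  {WD : MorphismProperty D} {F : C ⥤ D} {G : D ⥤ C} {hF : PresW WC WD F} {hG : PresW WD WC G}
  (adj : RelAdjunction WC WD F G hF hG)

noncomputable def unit : 𝟭 WC.Localization ⟶ descend WC WD F hF ⋙ descend WD WC G hG :=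
  (Localization.fullyFaithfulWhiskeringLeft WC.Q WC _).preimage ((realize WC WC).map adj.β)

noncomputable def counit : descend WD WC G hG ⋙ descend WC WD F hF ⟶ 𝟭 WD.Localization :=
  (Localization.fullyFaithfulWhiskeringLeft WD.Q WD _).preimage ((realize WD WD).map adj.α)

lemma unit_app (X : C) : adj.unit.app (WC.Q.obj X) = ((realize WC WC).map adj.β).app X :=
  congr_app ((Localization.fullyFaithfulWhiskeringLeft WC.Q WC _).map_preimage _) X

lemma counit_app (Y : D) : adj.counit.app (WD.Q.obj Y) = ((realize WD WD).map adj.α).app Y :=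
  congr_app ((Localization.fullyFaithfulWhiskeringLeft WD.Q WD _).map_preimage _) Y

lemma left_triangle_app (X : C) :
    (descend WC WD F hF).map (adj.unit.app (WC.Q.obj X)) ≫
      adj.counit.app ((descend WC WD F hF).obj (WC.Q.obj X)) = 𝟙 _ := by
  have h : whiskerRight ((realize WC WC).map adj.β) (descend WC WD F hF) ≫
      whiskerLeft F ((realize WD WD).map adj.α) = 𝟙 _ := by
    rw [← realize_map_postcompLoc_map, ← realize_map_precompLoc_map WD WD WC F hF]
    exact ((realize WC WD).map_comp _ _).symm.trans
      (((realize WC WD).congr_map adj.triangle_F).trans ((realize WC WD).map_id _))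
  have hc : adj.counit.app ((descend WC WD F hF).obj (WC.Q.obj X)) =
      ((realize WD WD).map adj.α).app (F.obj X) := adj.counit_app (F.obj X)
  rw [unit_app, hc]
  exact congr_app h X

lemma right_triangle_app (Y : D) :
    adj.unit.app ((descend WD WC G hG).obj (WD.Q.obj Y)) ≫
      (descend WD WC G hG).map (adj.counit.app (WD.Q.obj Y)) = 𝟙 _ := by
  have h : whiskerLeft G ((realize WC WC).map adj.β) ≫
      whiskerRight ((realize WD WD).map adj.α) (descend WD WC G hG) = 𝟙 _ := by
    rw [← realize_map_precompLoc_map WC WC WD G hG, ← realize_map_postcompLoc_map]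
    exact ((realize WD WC).map_comp _ _).symm.trans
      (((realize WD WC).congr_map adj.triangle_G).trans ((realize WD WC).map_id _))
  have hu : adj.unit.app ((descend WD WC G hG).obj (WD.Q.obj Y)) =
      ((realize WC WC).map adj.β).app (G.obj Y) := adj.unit_app (G.obj Y)
  rw [hu, counit_app]
  exact congr_app h Y

noncomputable def adjunction : descend WC WD F hF ⊣ descend WD WC G hG :=
  Adjunction.mkOfUnitCounit
    { unit := adj.unit
      counit := adj.counit
      left_triangle := Localization.natTrans_ext WC.Q WC fun X => by
        simpa using adj.left_triangle_app X
      right_triangle := Localization.natTrans_ext WD.Q WD fun Y => by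
        simpa using adj.right_triangle_app Y }

end RelAdjunction

section MateKanExtension

variable {A B A' B' E : Type*} [Category A] [Category B] [Category A'] [Category B'] [Category E]
  {F : A ⥤ B} {G : B ⥤ A} (adj : F ⊣ G) {F' : A' ⥤ B'} {G' : B' ⥤ A'} (adj' : F' ⊣ G')
  {LA : A ⥤ A'} {LB : B ⥤ B'} (e : G ⋙ LA ≅ LB ⋙ G')

noncomputable def isoMate : LA ⋙ F' ⟶ F ⋙ LB :=
  ((mateEquiv adj adj').symm e.hom).natTrans

noncomputable def transposeAlong {K : A' ⥤ E} {H : B' ⥤ E} (β : LA ⋙ K ⟶ F ⋙ LB ⋙ H) :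
    LB ⋙ G' ⋙ K ⟶ LB ⋙ H :=
  whiskerRight e.inv K ≫ whiskerLeft G β ≫ whiskerRight adj.counit (LB ⋙ H)

lemma whiskerLeft_homEquiv_symm_eq_transposeAlong {K : A' ⥤ E} {H : B' ⥤ E}
    (m : K ⟶ F' ⋙ H) :
    whiskerLeft LB (((adj'.whiskerLeft E).homEquiv K H).symm m) =
      transposeAlong adj e (whiskerLeft LA m ≫ whiskerRight (isoMate adj adj' e) H) := by
  ext b
  have hcounit : (isoMate adj adj' e).app (G.obj b) ≫ LB.map (adj.counit.app b) =
      F'.map (e.hom.app b) ≫ adj'.counit.app (LB.obj b) :=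
    (mateEquiv_counit_symm adj adj' e.hom b).symm
  have hm : K.map (e.inv.app b) ≫ m.app (LA.obj (G.obj b)) =
      m.app (G'.obj (LB.obj b)) ≫ H.map (F'.map (e.inv.app b)) := m.naturality _
  rw [Adjunction.homEquiv_counit]
  simp only [transposeAlong, comp_obj, whiskeringLeft_obj_obj, whiskeringLeft_obj_map,
    NatTrans.comp_app, whiskerLeft_app, Adjunction.whiskerLeft_counit_app_app, whiskerRight_app,
    Functor.comp_map, Category.assoc]
  rw [reassoc_of% hm, ← H.map_comp, hcounit, ← H.map_comp, ← F'.map_comp_assoc, e.inv_hom_id_app]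
  simp

lemma whiskerLeft_homEquiv_comp_whiskerRight_isoMate {K : A' ⥤ E} {H : B' ⥤ E}
    (β : LA ⋙ K ⟶ F ⋙ LB ⋙ H) (δ : G' ⋙ K ⟶ H)
    (hδ : whiskerLeft LB δ = transposeAlong adj e β) :
    whiskerLeft LA ((adj'.whiskerLeft E).homEquiv K H δ) ≫
      whiskerRight (isoMate adj adj' e) H = β := by
  ext a
  have hunit : adj'.unit.app (LA.obj a) ≫ G'.map ((isoMate adj adj' e).app a) =
      LA.map (adj.unit.app a) ≫ e.hom.app (F.obj a) :=
    (unit_mateEquiv_symm adj adj' e.hom a).symm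
  have hδa : δ.app (LB.obj (F.obj a)) = K.map (e.inv.app (F.obj a)) ≫
      β.app (G.obj (F.obj a)) ≫ H.map (LB.map (adj.counit.app (F.obj a))) :=
    congr_app hδ (F.obj a)
  have hδ_nat : δ.app (F'.obj (LA.obj a)) ≫ H.map ((isoMate adj adj' e).app a) =
      K.map (G'.map ((isoMate adj adj' e).app a)) ≫ δ.app (LB.obj (F.obj a)) :=
    (δ.naturality _).symm
  have hβ : K.map (LA.map (adj.unit.app a)) ≫ β.app (G.obj (F.obj a)) =
      β.app a ≫ H.map (LB.map (F.map (adj.unit.app a))) := β.naturality _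
  rw [Adjunction.homEquiv_unit]
  simp only [NatTrans.comp_app, whiskerLeft_app, whiskerRight_app, comp_obj,
    whiskeringLeft_obj_obj, whiskeringLeft_obj_map, Adjunction.whiskerLeft_unit_app_app,
    Category.assoc]
  rw [hδ_nat, ← K.map_comp_assoc, hunit, hδa, K.map_comp_assoc,
    ← K.map_comp_assoc (e.hom.app _), e.hom_inv_id_app, K.map_id, Category.id_comp,
    reassoc_of% hβ, ← H.map_comp, ← LB.map_comp, adj.left_triangle_components, LB.map_id,
    H.map_id, Category.comp_id]

theorem isRightKanExtension_whiskerRight_isoMate (WB : MorphismProperty B)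
    [LB.IsLocalization WB] (H : B' ⥤ E) :
    (F' ⋙ H).IsRightKanExtension (whiskerRight (isoMate adj adj' e) H) := by
  let ff := Localization.fullyFaithfulWhiskeringLeft LB WB E
  let hom K := (adj'.whiskerLeft E).homEquiv K H
  refine ⟨⟨Limits.IsTerminal.ofUniqueHom
    (fun K => CostructuredArrow.homMk (hom K.left (ff.preimage (transposeAlong adj e K.hom)))
      (whiskerLeft_homEquiv_comp_whiskerRight_isoMate adj adj' e K.hom _ (ff.map_preimage _)))
    (fun K m => ?_)⟩⟩
  ext1
  rw [← (hom K.left).apply_symm_apply m.left]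
  congr 1
  apply ff.map_injective
  rw [ff.map_preimage, ← CostructuredArrow.w m]
  exact whiskerLeft_homEquiv_symm_eq_transposeAlong adj adj' e m.left

end MateKanExtension

universe w' w

theorem realizableHocolim_is_absolute_left_derived_colimit_general
    {C : Type*} [Category C] (W : MorphismProperty C)
    (I : Type) [SmallCategory I] [Limits.HasColimitsOfShape I C]
    (R : RealizableHocolim I C W) :
    ∃ α : (ptW I W).Q ⋙ descend (ptW I W) W R.H R.relH ⟶ Limits.colim ⋙ W.Q,
      ∀ {E : Type w} [Category.{w'} E] (H : W.Localization ⥤ E),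
        (descend (ptW I W) W R.H R.relH ⋙ H).IsRightKanExtension (Functor.whiskerRight α H) := by
  let e := eqToIso (Q_comp_descend W (ptW I W) (Functor.const I) (constPres I W)).symm
  refine ⟨isoMate Limits.colimConstAdj R.adj.adjunction e, fun H => ?_⟩
  exact isRightKanExtension_whiskerRight_isoMate Limits.colimConstAdj R.adj.adjunction e W H

theorem realizableHocolim_is_absolute_left_derived_colimit
    {C : Type*} [Category C] (W : MorphismProperty C) (hW : Saturated W)
    (I : Type) [SmallCategory I] [Limits.HasColimitsOfShape I C]
    (R : RealizableHocolim I C W) :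
    ∃ α : (ptW I W).Q ⋙ descend (ptW I W) W R.H R.relH ⟶ Limits.colim ⋙ W.Q,
      ∀ {E : Type w} [Category.{w'} E] (H : W.Localization ⥤ E),
        (descend (ptW I W) W R.H R.relH ⋙ H).IsRightKanExtension (Functor.whiskerRight α H) :=
  realizableHocolim_is_absolute_left_derived_colimit_general W I R

end Paper
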